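/- Let X be a Banach space, x ∈ S_X a LUR point of the norm, and (T_n) a sequence of bounded linear operators on X with ‖T_n‖ → 1 and ‖T_n x − x‖ → 0. Then for any sequence ε_n → 0+, the diameters of the sets D_n = {y ∈ B_X : ‖T_n(x − y)‖ < ε_n} tend to 0. -/

import Mathlib

open Filter Topology Metric

/-!
Since `T_n x → x` and `‖T_n‖ → 1`, every `y ∈ D_n` satisfies
`‖T_n‖ ‖x + y‖ ≥ ‖T_n (2x)‖ - ‖T_n (x - y)‖ ≥ 2 ‖T_n x‖ - ε_n → 2`, so any selection `y_n ∈ D_n`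
has `‖x + y_n‖ → 2`, and LUR forces `y_n → x`. Applied to pairs of points of `D_n` that nearly
realise its diameter, this shows `diam D_n → 0`.
-/

namespace Metric

variable {α : Type*} [PseudoMetricSpace α]

theorem exists_diam_le_dist_add {s : Set α} (hs : s.Nonempty) {δ : ℝ} (hδ : 0 < δ) :
    ∃ p ∈ s, ∃ q ∈ s, diam s ≤ dist p q + δ := by
  by_contra! h
  obtain ⟨x, hx⟩ := hs
  have hδ_le : δ ≤ diam s := by simpa using (h x hx x hx).le
  have : diam s ≤ diam s - δ :=
    diam_le_of_forall_dist_le (by linarith) fun p hp q hq => by linarith [h p hp q hq]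
  linarith

theorem tendsto_diam_of_forall_tendsto {D : ℕ → Set α} (hD : ∀ n, (D n).Nonempty) (x : α)
    (h : ∀ w : ℕ → α, (∀ n, w n ∈ D n) → Tendsto w atTop (𝓝 x)) :
    Tendsto (fun n => diam (D n)) atTop (𝓝 0) := by
  choose p hp q hq hpq using fun n : ℕ =>
    exists_diam_le_dist_add (hD n) (Nat.one_div_pos_of_nat (α := ℝ) (n := n))
  have hp_lim := tendsto_iff_dist_tendsto_zero.1 (h p hp)
  have hq_lim := tendsto_iff_dist_tendsto_zero.1 (h q hq)
  have hbound : Tendsto (fun n : ℕ => dist (p n) x + dist (q n) x + 1 / ((n : ℝ) + 1))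
      atTop (𝓝 0) := by
    simpa using (hp_lim.add hq_lim).add tendsto_one_div_add_atTop_nhds_zero_nat
  refine tendsto_of_tendsto_of_tendsto_of_le_of_le tendsto_const_nhds hbound
    (fun _ => diam_nonneg) fun n => ?_
  have := dist_triangle_right (p n) (q n) x
  linarith [hpq n]

end Metric

section OperatorSequence

variable {E F : Type*} [SeminormedAddCommGroup E] [NormedSpace ℝ E]
  [SeminormedAddCommGroup F] [NormedSpace ℝ F]

theorem ContinuousLinearMap.two_mul_norm_apply_sub_le (T : E →L[ℝ] F) (x y : E) :
    2 * ‖T x‖ - ‖T (x - y)‖ ≤ ‖T‖ * ‖x + y‖ := by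
  have hsplit : T (x + y) = (2 : ℝ) • T x - T (x - y) := by
    simp only [map_add, map_sub, two_smul]
    abel
  calc 2 * ‖T x‖ - ‖T (x - y)‖ = ‖(2 : ℝ) • T x‖ - ‖T (x - y)‖ := by
        rw [norm_smul, Real.norm_two]
    _ ≤ ‖T (x + y)‖ := hsplit ▸ norm_sub_norm_le _ _
    _ ≤ ‖T‖ * ‖x + y‖ := T.le_opNorm _

theorem tendsto_norm_add_of_tendsto_opNorm {ι : Type*} {l : Filter ι} {x : E} (hx : ‖x‖ = 1)
    {T : ι → E →L[ℝ] E} (hTnorm : Tendsto (fun n => ‖T n‖) l (𝓝 1))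
    (hTx : Tendsto (fun n => T n x) l (𝓝 x)) {ε : ι → ℝ} (hε : Tendsto ε l (𝓝 0))
    {w : ι → E} (hw : ∀ n, ‖w n‖ ≤ 1) (hwT : ∀ n, ‖T n (x - w n)‖ ≤ ε n) :
    Tendsto (fun n => ‖x + w n‖) l (𝓝 2) := by
  have hlower : Tendsto (fun n => (2 * ‖T n x‖ - ε n) / ‖T n‖) l (𝓝 2) := by
    simpa [hx, Pi.div_def] using ((hTx.norm.const_mul 2).sub hε).div hTnorm one_ne_zero
  have hle : ∀ᶠ n in l, (2 * ‖T n x‖ - ε n) / ‖T n‖ ≤ ‖x + w n‖ := by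
    filter_upwards [hTnorm.eventually (eventually_gt_nhds one_pos)] with n hn
    rw [div_le_iff₀ hn, mul_comm]
    linarith [(T n).two_mul_norm_apply_sub_le x (w n), hwT n]
  have hge : ∀ n, ‖x + w n‖ ≤ 2 := fun n => by
    linarith [norm_add_le x (w n), hw n]
  exact tendsto_of_tendsto_of_tendsto_of_le_of_le' hlower tendsto_const_nhds hle
    (Eventually.of_forall hge)

end OperatorSequence

theorem stmt13 {X : Type*} [NormedAddCommGroup X] [NormedSpace ℝ X]
    (x : X) (hx : ‖x‖ = 1)
    (hLUR : ∀ u : ℕ → X, (∀ n, ‖u n‖ ≤ 1) →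
      Tendsto (fun n => ‖x + u n‖) atTop (nhds 2) →
      Tendsto (fun n => ‖x - u n‖) atTop (nhds 0))
    (T : ℕ → X →L[ℝ] X)
    (hTnorm : Tendsto (fun n => ‖T n‖) atTop (nhds 1))
    (hTx : Tendsto (fun n => ‖T n x - x‖) atTop (nhds 0))
    (ε : ℕ → ℝ) (hε : ∀ n, 0 < ε n) (hε0 : Tendsto ε atTop (nhds 0)) :
    Tendsto (fun n => Metric.diam {y : X | ‖y‖ ≤ 1 ∧ ‖T n (x - y)‖ < ε n})
      atTop (nhds 0) := by
  refine tendsto_diam_of_forall_tendsto (fun n => ⟨x, hx.le, by simpa using hε n⟩) x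
    fun w hw => ?_
  have hnorm_add := tendsto_norm_add_of_tendsto_opNorm hx hTnorm
    (tendsto_iff_norm_sub_tendsto_zero.2 hTx) hε0 (fun n => (hw n).1) fun n => (hw n).2.le
  rw [tendsto_iff_norm_sub_tendsto_zero]
  simpa only [norm_sub_rev, sub_zero, norm_norm] using hLUR w (fun n => (hw n).1) hnorm_add
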